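/- Under the same hypotheses (σ_min(Λᵀ Σ_u⁻¹ Λ) ≥ c₀ ψ, ‖Λᵀ Σ_u⁻¹ Λ‖ ≤ C₀ ψ, ‖Σ_f⁻¹‖ ≤ C, ‖ρ‖ ≤ C), the idiosyncratic variance contribution V₂ := βᵀ Σ_u β, with β = Σ_u⁻¹ Λ (Σ_f⁻¹ + Λᵀ Σ_u⁻¹ Λ)⁻¹ ρ, satisfies V₂ ≤ C' / ψ for a constant C' depending only on c₀, C₀, C. -/

import Mathlib

/-!
Put `w := (Σ_f⁻¹ + ΛᵀΣ_u⁻¹Λ)⁻¹ ρ`. Since `Σ_u β = Λw`, the variance `βᵀΣ_uβ` collapses to the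
quadratic form `wᵀ(ΛᵀΣ_u⁻¹Λ)w ≤ C₀ψ‖w‖²`. The matrix `Σ_f⁻¹ + ΛᵀΣ_u⁻¹Λ` is coercive with constant
`c₀ψ`, so it cannot shrink vectors by more than that factor: `c₀ψ‖w‖ ≤ ‖ρ‖ ≤ C`. Hence
`βᵀΣ_uβ ≤ C₀ψ · C²/(c₀ψ)² = (C₀C²/c₀²)/ψ`.
-/

namespace Matrix

variable {m n R : Type*} [Fintype m] [Fintype n]

theorem dotProduct_sq_le_dotProduct_self_mul [CommRing R] [LinearOrder R] [IsStrictOrderedRing R]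
    (v w : n → R) : (v ⬝ᵥ w) ^ 2 ≤ (v ⬝ᵥ v) * (w ⬝ᵥ w) := by
  simpa only [dotProduct, sq] using Finset.sum_mul_sq_le_sq_mul_sq Finset.univ v w

theorem dotProduct_self_nonneg [CommRing R] [LinearOrder R] [IsStrictOrderedRing R]
    (v : n → R) : 0 ≤ v ⬝ᵥ v :=
  Finset.sum_nonneg fun i _ => mul_self_nonneg (v i)

theorem dotProduct_transpose_mul_mul_mulVec [CommSemiring R] (Λ : Matrix m n R)
    (S : Matrix m m R) (w : n → R) :
    w ⬝ᵥ ((Λᵀ * S * Λ) *ᵥ w) = (Λ *ᵥ w) ⬝ᵥ (S *ᵥ (Λ *ᵥ w)) := by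
  rw [← mulVec_mulVec, ← mulVec_mulVec, dotProduct_mulVec, vecMul_transpose, dotProduct_comm]

theorem inv_mulVec_dotProduct_mulVec_inv_mulVec [DecidableEq m] [CommRing R] {S : Matrix m m R}
    (hS : IsUnit S.det) (v : m → R) :
    (S⁻¹ *ᵥ v) ⬝ᵥ (S *ᵥ (S⁻¹ *ᵥ v)) = v ⬝ᵥ (S⁻¹ *ᵥ v) := by
  rw [mulVec_mulVec, mul_nonsing_inv S hS, one_mulVec, dotProduct_comm]

section Coercive

variable [Field R] [LinearOrder R] [IsStrictOrderedRing R] {A : Matrix n n R} {c : R}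

theorem isUnit_det_of_coercive [DecidableEq n] (hc : 0 < c)
    (hA : ∀ x, c * (x ⬝ᵥ x) ≤ x ⬝ᵥ (A *ᵥ x)) : IsUnit A.det := by
  rw [isUnit_iff_ne_zero, Ne, ← exists_mulVec_eq_zero_iff]
  rintro ⟨x, hx, hAx⟩
  have hxx : 0 < x ⬝ᵥ x :=
    (dotProduct_self_nonneg x).lt_of_ne' (dotProduct_self_eq_zero.not.mpr hx)
  have := hA x
  rw [hAx, dotProduct_zero] at this
  nlinarith

theorem sq_mul_dotProduct_self_le_of_coercive (hc : 0 ≤ c)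
    (hA : ∀ x, c * (x ⬝ᵥ x) ≤ x ⬝ᵥ (A *ᵥ x)) (w : n → R) :
    c ^ 2 * (w ⬝ᵥ w) ≤ (A *ᵥ w) ⬝ᵥ (A *ᵥ w) := by
  have hw : 0 ≤ w ⬝ᵥ w := dotProduct_self_nonneg w
  have hlow : c * (w ⬝ᵥ w) ≤ w ⬝ᵥ (A *ᵥ w) := hA w
  have hCS := dotProduct_sq_le_dotProduct_self_mul w (A *ᵥ w)
  rcases hw.eq_or_lt with h | h
  · rw [← h, mul_zero]; exact dotProduct_self_nonneg _
  · have hsq : (c * (w ⬝ᵥ w)) ^ 2 ≤ (w ⬝ᵥ (A *ᵥ w)) ^ 2 := pow_le_pow_left₀ (by positivity) hlow 2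
    nlinarith

end Coercive

end Matrix

open Matrix

/-- Bound on the idiosyncratic residual variance `V₂ = βᵀ Σ_u β`:
under `c₀ψ ≤ σ_min(ΛᵀΣ_u⁻¹Λ)`, `‖ΛᵀΣ_u⁻¹Λ‖ ≤ C₀ψ`, `‖Σ_f⁻¹‖ ≤ C`, `‖ρ‖ ≤ C`,
we have `V₂ ≤ C'/ψ` with `C'` depending only on `c₀, C₀, C`. -/
theorem idiosyncratic_residual_variance_bound (K : ℕ) (c₀ C₀ C : ℝ)
    (hc₀ : 0 < c₀) (hC₀ : 0 < C₀) (hC : 0 < C) :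
    ∃ C' : ℝ, 0 < C' ∧
      ∀ (p : ℕ) (Λ : Matrix (Fin p) (Fin K) ℝ) (Su : Matrix (Fin p) (Fin p) ℝ)
        (Sf : Matrix (Fin K) (Fin K) ℝ) (ρ : Fin K → ℝ) (ψ : ℝ),
        0 < ψ →
        Su.PosDef →
        (∀ x : Fin K → ℝ, c₀ * ψ * (x ⬝ᵥ x) ≤ x ⬝ᵥ ((Λᵀ * Su⁻¹ * Λ) *ᵥ x)) →
        (∀ x : Fin K → ℝ, x ⬝ᵥ ((Λᵀ * Su⁻¹ * Λ) *ᵥ x) ≤ C₀ * ψ * (x ⬝ᵥ x)) →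
        Sf.PosDef →
        (∀ x : Fin K → ℝ, x ⬝ᵥ (Sf⁻¹ *ᵥ x) ≤ C * (x ⬝ᵥ x)) →
        ρ ⬝ᵥ ρ ≤ C ^ 2 →
        (let β := Su⁻¹ *ᵥ (Λ *ᵥ ((Sf⁻¹ + Λᵀ * Su⁻¹ * Λ)⁻¹ *ᵥ ρ))
         β ⬝ᵥ (Su *ᵥ β) ≤ C' / ψ) := by
  refine ⟨C₀ * C ^ 2 / c₀ ^ 2, by positivity, ?_⟩
  intro p Λ Su Sf ρ ψ hψ hSu hlow hup hSf _ hρ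
  set A := Sf⁻¹ + Λᵀ * Su⁻¹ * Λ
  set w := A⁻¹ *ᵥ ρ
  have hcoercive : ∀ x, c₀ * ψ * (x ⬝ᵥ x) ≤ x ⬝ᵥ (A *ᵥ x) := fun x => by
    have hSf_inv := hSf.inv.posSemidef.dotProduct_mulVec_nonneg x
    rw [star_trivial] at hSf_inv
    rw [add_mulVec, dotProduct_add]
    linarith [hlow x]
  have hAw : A *ᵥ w = ρ := by
    rw [mulVec_mulVec, mul_nonsing_inv A (isUnit_det_of_coercive (by positivity) hcoercive),
      one_mulVec]
  have hw : (c₀ * ψ) ^ 2 * (w ⬝ᵥ w) ≤ C ^ 2 :=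
    (hAw ▸ sq_mul_dotProduct_self_le_of_coercive (by positivity) hcoercive w).trans hρ
  show (Su⁻¹ *ᵥ (Λ *ᵥ w)) ⬝ᵥ (Su *ᵥ (Su⁻¹ *ᵥ (Λ *ᵥ w))) ≤ _
  rw [inv_mulVec_dotProduct_mulVec_inv_mulVec hSu.det_pos.ne'.isUnit,
    ← dotProduct_transpose_mul_mul_mulVec]
  calc w ⬝ᵥ ((Λᵀ * Su⁻¹ * Λ) *ᵥ w) ≤ C₀ * ψ * (w ⬝ᵥ w) := hup w
    _ ≤ C₀ * ψ * (C ^ 2 / (c₀ * ψ) ^ 2) := by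
      gcongr
      rwa [le_div_iff₀ (by positivity), mul_comm]
    _ = C₀ * C ^ 2 / c₀ ^ 2 / ψ := by field_simp
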